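/- Assume f̃ is L_f̃-Lipschitz on X × Y and the Slater condition holds with constant G > 0. Let ρ, μ, ε > 0, L_f ≥ 0, and let (xε, yε) ∈ X × Y satisfy ‖[g̃(xε,yε)]₊‖ ≤ (2μG)⁻¹ D_Y ( ρ⁻¹ε + ρ⁻¹L_f + L_f̃ ). Then |f̃(xε,yε) − f̃*(xε)| ≤ max{ ρ⁻¹( sup_{z∈Y} P_{ρ,μ}(xε,yε,z) − f_low ), (2μ)⁻¹ G⁻² D_Y² L_f̃ ( ρ⁻¹ε + ρ⁻¹L_f + L_f̃ ) }. -/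

import Mathlib

noncomputable section

open Set

open scoped RealInnerProductSpace

/-- Euclidean space `ℝⁿ`. -/
abbrev En (n : ℕ) := EuclideanSpace ℝ (Fin n)

/-- Componentwise positive part `[v]₊` of a vector `v ∈ ℝˡ`. -/
def posPart {l : ℕ} (v : En l) : En l := WithLp.toLp 2 (fun i => max (v i) 0)

/-- The Euclidean distance `‖(x,y) − (x',y')‖` on `ℝⁿ × ℝᵐ`. -/
def prodDist {n m : ℕ} (p q : En n × En m) : ℝ :=
  Real.sqrt (‖p.1 - q.1‖ ^ 2 + ‖p.2 - q.2‖ ^ 2)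

/-- `φ` is `L`-Lipschitz on `X × Y` (with the Euclidean norm on `ℝⁿ × ℝᵐ`). -/
def LipOnXY {n m : ℕ} (φ : En n × En m → ℝ) (L : ℝ)
    (X : Set (En n)) (Y : Set (En m)) : Prop :=
  ∀ p ∈ X ×ˢ Y, ∀ q ∈ X ×ˢ Y, |φ p - φ q| ≤ L * prodDist p q

/-- The Slater condition with constant `G`. -/
def Slater {n m l : ℕ} (gt : En n × En m → En l) (X : Set (En n)) (Y : Set (En m))
    (G : ℝ) : Prop :=
  ∀ x ∈ X, ∃ zhat ∈ Y, ∀ i, gt (x, zhat) i ≤ -G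

/-- The lower-level value function `f̃*(x) = inf { f̃(x,z) : z ∈ Y, g̃(x,z) ≤ 0 }`. -/
def ftStar {n m l : ℕ} (ft : En n × En m → ℝ) (gt : En n × En m → En l)
    (Y : Set (En m)) (x : En n) : ℝ :=
  sInf {v | ∃ z ∈ Y, (∀ i, gt (x, z) i ≤ 0) ∧ v = ft (x, z)}

/-- `f̃*_hi = sup_{x ∈ X} f̃*(x)`. -/
def ftStarHi {n m l : ℕ} (ft : En n × En m → ℝ) (gt : En n × En m → En l)
    (X : Set (En n)) (Y : Set (En m)) : ℝ :=
  sSup {v | ∃ x ∈ X, v = ftStar ft gt Y x}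

/-- `f̃_low = inf { f̃(x,y) : (x,y) ∈ X × Y }`. -/
def ftLow {n m : ℕ} (ft : En n × En m → ℝ) (X : Set (En n)) (Y : Set (En m)) : ℝ :=
  sInf {v | ∃ x ∈ X, ∃ y ∈ Y, v = ft (x, y)}

/-- `f̃_hi = sup { f̃(x,y) : (x,y) ∈ X × Y }`. -/
def ftHi {n m : ℕ} (ft : En n × En m → ℝ) (X : Set (En n)) (Y : Set (En m)) : ℝ :=
  sSup {v | ∃ x ∈ X, ∃ y ∈ Y, v = ft (x, y)}

/-- `f_low = inf { f(x,y) : (x,y) ∈ X × Y }`. -/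
def fLow {n m : ℕ} (f : En n × En m → ℝ) (X : Set (En n)) (Y : Set (En m)) : ℝ :=
  sInf {v | ∃ x ∈ X, ∃ y ∈ Y, v = f (x, y)}

/-- `g̃_hi = sup { ‖g̃(x,y)‖ : (x,y) ∈ X × Y }`. -/
def gtHi {n m l : ℕ} (gt : En n × En m → En l) (X : Set (En n)) (Y : Set (En m)) : ℝ :=
  sSup {v | ∃ x ∈ X, ∃ y ∈ Y, v = ‖gt (x, y)‖}

/-- The lower-level penalty function `P̃_μ(x,z) = f̃(x,z) + μ ‖[g̃(x,z)]₊‖²`. -/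
def Ptilde {n m l : ℕ} (ft : En n × En m → ℝ) (gt : En n × En m → En l)
    (μ : ℝ) (x : En n) (z : En m) : ℝ :=
  ft (x, z) + μ * ‖posPart (gt (x, z))‖ ^ 2

/-- `inf_{z ∈ Y} P̃_μ(x,z)`. -/
def PtildeMinVal {n m l : ℕ} (ft : En n × En m → ℝ) (gt : En n × En m → En l)
    (Y : Set (En m)) (μ : ℝ) (x : En n) : ℝ :=
  sInf {w | ∃ z ∈ Y, w = Ptilde ft gt μ x z}

/-- The minimax penalty function `P_{ρ,μ}(x,y,z) = f(x,y) + ρ (P̃_μ(x,y) − P̃_μ(x,z))`. -/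
def Prhomu {n m l : ℕ} (f ft : En n × En m → ℝ) (gt : En n × En m → En l)
    (ρ μ : ℝ) (x : En n) (y z : En m) : ℝ :=
  f (x, y) + ρ * (Ptilde ft gt μ x y - Ptilde ft gt μ x z)

/-- `sup_{z ∈ Y} P_{ρ,μ}(x,y,z)`. -/
def maxPc {n m l : ℕ} (f ft : En n × En m → ℝ) (gt : En n × En m → En l)
    (Y : Set (En m)) (ρ μ : ℝ) (x : En n) (y : En m) : ℝ :=
  sSup {v | ∃ z ∈ Y, v = Prhomu f ft gt ρ μ x y z}

/-- `inf_{(x,y)∈X×Y} sup_{z∈Y} P_{ρ,μ}(x,y,z)`. -/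
def minimaxValc {n m l : ℕ} (f ft : En n × En m → ℝ) (gt : En n × En m → En l)
    (X : Set (En n)) (Y : Set (En m)) (ρ μ : ℝ) : ℝ :=
  sInf {v | ∃ x ∈ X, ∃ y ∈ Y, v = maxPc f ft gt Y ρ μ x y}

/-- `(x,y,z)` is an ε-optimal solution of `min_{(x,y)∈X×Y} max_{z∈Y} P_{ρ,μ}(x,y,z)`. -/
def epsOptimalc {n m l : ℕ} (f ft : En n × En m → ℝ) (gt : En n × En m → En l)
    (X : Set (En n)) (Y : Set (En m)) (ρ μ ε : ℝ) (x : En n) (y z : En m) : Prop :=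
  maxPc f ft gt Y ρ μ x y - Prhomu f ft gt ρ μ x y z ≤ ε ∧
  Prhomu f ft gt ρ μ x y z - minimaxValc f ft gt X Y ρ μ ≤ ε

/-- The constrained bilevel optimal value
`f* = inf { f(x,y) : x ∈ X, y ∈ Y, g̃(x,y) ≤ 0, f̃(x,y) = f̃*(x) }`. -/
def fStarC {n m l : ℕ} (f ft : En n × En m → ℝ) (gt : En n × En m → En l)
    (X : Set (En n)) (Y : Set (En m)) : ℝ :=
  sInf {v | ∃ x ∈ X, ∃ y ∈ Y,
    (∀ i, gt (x, y) i ≤ 0) ∧ ft (x, y) = ftStar ft gt Y x ∧ v = f (x, y)}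

/-- The penalized bilevel optimal value
`f*_μ = inf { f(x,y) : x ∈ X, y ∈ Y, P̃_μ(x,y) = inf_{z∈Y} P̃_μ(x,z) }`. -/
def fStarMu {n m l : ℕ} (f ft : En n × En m → ℝ) (gt : En n × En m → En l)
    (X : Set (En n)) (Y : Set (En m)) (μ : ℝ) : ℝ :=
  sInf {v | ∃ x ∈ X, ∃ y ∈ Y, Ptilde ft gt μ x y = PtildeMinVal ft gt Y μ x ∧ v = f (x, y)}

/-- The set `S_θ(x)` of θ-approximately feasible lower-level minimizers. -/
def Sθ {n m l : ℕ} (ft : En n × En m → ℝ) (gt : En n × En m → En l)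
    (Y : Set (En m)) (θ : ℝ) (x : En n) : Set (En m) :=
  {z | z ∈ Y ∧ ‖posPart (gt (x, z))‖ ≤ θ ∧
    ft (x, z) = sInf {w | ∃ z' ∈ Y, ‖posPart (gt (x, z'))‖ ≤ θ ∧ w = ft (x, z')}}

/-- The error-bound assumption with constants `θbar` and function `ω`. -/
def ErrorBound {n m l : ℕ} (ft : En n × En m → ℝ) (gt : En n × En m → En l)
    (X : Set (En n)) (Y : Set (En m)) (θbar : ℝ) (ω : ℝ → ℝ) : Prop :=
  0 < θbar ∧ (∀ t, 0 ≤ t → 0 ≤ ω t) ∧ (∀ a b, 0 ≤ a → a ≤ b → ω a ≤ ω b) ∧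
    Filter.Tendsto ω (nhdsWithin 0 (Set.Ioi 0)) (nhds 0) ∧
    ∀ x ∈ X, ∀ z ∈ Sθ ft gt Y 0 x, ∀ θ ∈ Set.Icc 0 θbar,
      Metric.infDist z (Sθ ft gt Y θ x) ≤ ω θ

/-! Upper bound: on a feasible `z` the penalty vanishes, so `P_{ρ,μ}(xε,yε,z) ≥ f(xε,yε) +
ρ (f̃(xε,yε) − f̃(xε,z))`; bounding the left side by its supremum over `z` and `f(xε,yε)` below by
`f_low` and taking the infimum over `z` gives `f̃(xε,yε) − f̃*(xε) ≤ ρ⁻¹ (sup_z P_{ρ,μ} − f_low)`.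

Lower bound: with `θ = ‖[g̃(xε,yε)]₊‖`, the point `z = yε + θ/(θ+G) (w − yε)` on the segment
towards the Slater point `w` is feasible by convexity of the `g̃_i(xε,·)`, and lies within
`θ D_Y / G` of `yε`, so `f̃*(xε) ≤ f̃(xε,z) ≤ f̃(xε,yε) + L_f̃ θ D_Y / G`. The assumed bound on `θ`
turns this into the second term of the maximum. -/

open Bornology Metric

theorem exists_feasible_near_of_slater {E ι : Type*} [SeminormedAddCommGroup E]
    [NormedSpace ℝ E] {Y : Set E} (hY : Convex ℝ Y) {g : ι → E → ℝ}
    (hg : ∀ i, ConvexOn ℝ Y (g i)) {y w : E} (hy : y ∈ Y) (hw : w ∈ Y) {θ G : ℝ}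
    (hθ : 0 ≤ θ) (hG : 0 < G) (hgy : ∀ i, g i y ≤ θ) (hgw : ∀ i, g i w ≤ -G) :
    ∃ z ∈ Y, (∀ i, g i z ≤ 0) ∧ ‖z - y‖ ≤ θ / G * ‖w - y‖ := by
  set t := θ / (θ + G)
  have hθG : 0 < θ + G := by linarith
  have ht : t * (θ + G) = θ := div_mul_cancel₀ θ hθG.ne'
  have ht0 : 0 ≤ t := by positivity
  have ht1 : 0 ≤ 1 - t := by nlinarith
  refine ⟨(1 - t) • y + t • w, hY hy hw ht1 ht0 (by ring), fun i => ?_, ?_⟩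
  · calc g i ((1 - t) • y + t • w) ≤ (1 - t) * g i y + t * g i w :=
          (hg i).2 hy hw ht1 ht0 (by ring)
      _ ≤ (1 - t) * θ + t * -G := by gcongr; exacts [hgy i, hgw i]
      _ = 0 := by linear_combination -ht
  · have hsub : (1 - t) • y + t • w - y = t • (w - y) := by module
    rw [hsub, norm_smul, Real.norm_of_nonneg ht0]
    gcongr
    exact div_le_div_of_nonneg_left hθ hG (by linarith)

section

variable {n m l : ℕ}

lemma apply_le_norm_posPart (v : En l) (i : Fin l) : v i ≤ ‖posPart v‖ :=
  calc v i ≤ posPart v i := le_max_left _ _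
    _ ≤ ‖posPart v i‖ := Real.le_norm_self _
    _ ≤ ‖posPart v‖ := PiLp.norm_apply_le _ i

lemma posPart_eq_zero_of_forall_nonpos {v : En l} (hv : ∀ i, v i ≤ 0) : posPart v = 0 := by
  ext i
  exact max_eq_right (hv i)

lemma prodDist_mk_left (x : En n) (z z' : En m) : prodDist (x, z) (x, z') = ‖z - z'‖ := by
  simp [prodDist, Real.sqrt_sq (norm_nonneg _)]

variable {φ : En n × En m → ℝ} {L : ℝ} {X : Set (En n)} {Y : Set (En m)} {x : En n}
  {y z : En m}

lemma LipOnXY.abs_sub_le_snd (h : LipOnXY φ L X Y) (hx : x ∈ X) (hy : y ∈ Y) (hz : z ∈ Y) :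
    |φ (x, y) - φ (x, z)| ≤ L * ‖y - z‖ := by
  simpa only [prodDist_mk_left] using h (x, y) ⟨hx, hy⟩ (x, z) ⟨hx, hz⟩

lemma LipOnXY.sub_mul_diam_le (h : LipOnXY φ L X Y) (hL : 0 ≤ L) (hY : IsBounded Y)
    (hx : x ∈ X) (hy : y ∈ Y) (hz : z ∈ Y) : φ (x, y) - L * diam Y ≤ φ (x, z) := by
  have hyz : ‖y - z‖ ≤ diam Y := by
    rw [← dist_eq_norm]
    exact dist_le_diam_of_mem hY hy hz
  have := (abs_le.mp (h.abs_sub_le_snd hx hy hz)).2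
  nlinarith

end

section

variable {n m l : ℕ} {f ft : En n × En m → ℝ} {gt : En n × En m → En l} {X : Set (En n)}
  {Y : Set (En m)} {ρ μ : ℝ} {x : En n} {y z : En m}

lemma le_Ptilde (hμ : 0 ≤ μ) : ft (x, z) ≤ Ptilde ft gt μ x z :=
  le_add_of_nonneg_right (by positivity)

lemma Ptilde_eq_of_feasible (hz : ∀ i, gt (x, z) i ≤ 0) : Ptilde ft gt μ x z = ft (x, z) := by
  simp [Ptilde, posPart_eq_zero_of_forall_nonpos hz]

lemma le_Prhomu_of_feasible (hρ : 0 ≤ ρ) (hμ : 0 ≤ μ) (hz : ∀ i, gt (x, z) i ≤ 0) :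
    f (x, y) + ρ * (ft (x, y) - ft (x, z)) ≤ Prhomu f ft gt ρ μ x y z := by
  unfold Prhomu
  rw [Ptilde_eq_of_feasible hz]
  gcongr
  exact le_Ptilde hμ

lemma bddAbove_Prhomu (hρ : 0 ≤ ρ) (hμ : 0 ≤ μ) {c : ℝ} (hc : ∀ z ∈ Y, c ≤ ft (x, z)) :
    BddAbove {v | ∃ z ∈ Y, v = Prhomu f ft gt ρ μ x y z} := by
  refine ⟨f (x, y) + ρ * (Ptilde ft gt μ x y - c), ?_⟩
  rintro _ ⟨z, hz, rfl⟩
  unfold Prhomu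
  gcongr
  exact (hc z hz).trans (le_Ptilde hμ)

lemma fLow_le (hX : IsCompact X) (hY : IsCompact Y) (hf : ContinuousOn f (X ×ˢ Y))
    (hx : x ∈ X) (hy : y ∈ Y) : fLow f X Y ≤ f (x, y) := by
  refine csInf_le ?_ ⟨x, hx, y, hy, rfl⟩
  obtain ⟨c, hc⟩ := ((hX.prod hY).image_of_continuousOn hf).bddBelow
  exact ⟨c, by rintro _ ⟨x', hx', y', hy', rfl⟩; exact hc ⟨(x', y'), ⟨hx', hy'⟩, rfl⟩⟩

theorem sub_ftStar_le_maxPc (hρ : 0 < ρ) (hμ : 0 ≤ μ)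
    (hfeas : ∃ z ∈ Y, ∀ i, gt (x, z) i ≤ 0)
    (hbdd : BddAbove {v | ∃ z ∈ Y, v = Prhomu f ft gt ρ μ x y z}) {c : ℝ}
    (hc : c ≤ f (x, y)) :
    ft (x, y) - ftStar ft gt Y x ≤ ρ⁻¹ * (maxPc f ft gt Y ρ μ x y - c) := by
  suffices ft (x, y) - ρ⁻¹ * (maxPc f ft gt Y ρ μ x y - c) ≤ ftStar ft gt Y x by linarith
  obtain ⟨z₀, hz₀, hz₀feas⟩ := hfeas
  refine le_csInf ⟨_, z₀, hz₀, hz₀feas, rfl⟩ ?_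
  rintro _ ⟨z, hz, hzfeas, rfl⟩
  have hPz : Prhomu f ft gt ρ μ x y z ≤ maxPc f ft gt Y ρ μ x y := le_csSup hbdd ⟨z, hz, rfl⟩
  have hgap : ρ * (ft (x, y) - ft (x, z)) ≤ maxPc f ft gt Y ρ μ x y - c := by
    linarith [le_Prhomu_of_feasible (f := f) (ft := ft) (y := y) hρ.le hμ hzfeas]
  linarith [(le_inv_mul_iff₀ hρ).mpr hgap]

variable {L G : ℝ}

lemma ftStar_le (hLip : LipOnXY ft L X Y) (hL : 0 ≤ L) (hY : IsBounded Y) (hx : x ∈ X)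
    (hz : z ∈ Y) (hzfeas : ∀ i, gt (x, z) i ≤ 0) : ftStar ft gt Y x ≤ ft (x, z) := by
  refine csInf_le ⟨ft (x, z) - L * diam Y, ?_⟩ ⟨z, hz, hzfeas, rfl⟩
  rintro _ ⟨z', hz', -, rfl⟩
  exact hLip.sub_mul_diam_le hL hY hx hz hz'

theorem ftStar_sub_le_of_slater (hYb : IsBounded Y) (hYconv : Convex ℝ Y)
    (hgtconv : ∀ i, ConvexOn ℝ Y fun z => gt (x, z) i) (hLip : LipOnXY ft L X Y)
    (hL : 0 ≤ L) (hslater : Slater gt X Y G) (hG : 0 < G) (hx : x ∈ X) (hy : y ∈ Y) :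
    ftStar ft gt Y x - ft (x, y) ≤ L * (‖posPart (gt (x, y))‖ / G * diam Y) := by
  obtain ⟨w, hw, hwG⟩ := hslater x hx
  obtain ⟨z, hz, hzfeas, hzy⟩ := exists_feasible_near_of_slater hYconv hgtconv hy hw
    (norm_nonneg _) hG (apply_le_norm_posPart _) hwG
  have hwy : ‖w - y‖ ≤ diam Y := by
    rw [← dist_eq_norm]
    exact dist_le_diam_of_mem hYb hw hy
  calc ftStar ft gt Y x - ft (x, y) ≤ ft (x, z) - ft (x, y) := by
        gcongr
        exact ftStar_le hLip hL hYb hx hz hzfeas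
    _ ≤ L * ‖z - y‖ := (abs_le.mp (hLip.abs_sub_le_snd hx hz hy)).2
    _ ≤ L * (‖posPart (gt (x, y))‖ / G * ‖w - y‖) := by gcongr
    _ ≤ L * (‖posPart (gt (x, y))‖ / G * diam Y) := by gcongr

end

theorem stmt16_general {n m l : ℕ}
    (X : Set (En n)) (Y : Set (En m))
    (hXcpt : IsCompact X)
    (hYcpt : IsCompact Y) (hYconv : Convex ℝ Y)
    (f ft : En n × En m → ℝ) (gt : En n × En m → En l)
    (hfc : ContinuousOn f (X ×ˢ Y))
    (hgtconv : ∀ x ∈ X, ∀ i, ConvexOn ℝ Y fun z => gt (x, z) i)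
    (hfeas : ∀ x ∈ X, ∃ z ∈ Y, ∀ i, gt (x, z) i ≤ 0)
    (Lft G : ℝ) (hLft : 0 ≤ Lft) (hG : 0 < G)
    (hLipft : LipOnXY ft Lft X Y)
    (hslater : Slater gt X Y G)
    (ρ μ ε : ℝ) (hρ : 0 < ρ) (hμ : 0 < μ)
    (Lf : ℝ)
    (xe : En n) (hxe : xe ∈ X) (ye : En m) (hye : ye ∈ Y)
    (hg : ‖posPart (gt (xe, ye))‖ ≤
      (2 * μ * G)⁻¹ * Metric.diam Y * (ρ⁻¹ * ε + ρ⁻¹ * Lf + Lft)) :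
    |ft (xe, ye) - ftStar ft gt Y xe| ≤
      max (ρ⁻¹ * (maxPc f ft gt Y ρ μ xe ye - fLow f X Y))
        ((2 * μ)⁻¹ * G⁻¹ ^ 2 * Metric.diam Y ^ 2 * Lft * (ρ⁻¹ * ε + ρ⁻¹ * Lf + Lft)) := by
  have hYb := hYcpt.isBounded
  have hupper := sub_ftStar_le_maxPc hρ hμ.le (hfeas xe hxe)
    (bddAbove_Prhomu hρ.le hμ.le fun z hz => hLipft.sub_mul_diam_le hLft hYb hxe hye hz)
    (fLow_le hXcpt hYcpt hfc hxe hye)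
  have hpenalty : Lft * (‖posPart (gt (xe, ye))‖ / G * diam Y) ≤
      (2 * μ)⁻¹ * G⁻¹ ^ 2 * diam Y ^ 2 * Lft * (ρ⁻¹ * ε + ρ⁻¹ * Lf + Lft) :=
    calc _ ≤ Lft * ((2 * μ * G)⁻¹ * diam Y * (ρ⁻¹ * ε + ρ⁻¹ * Lf + Lft) / G * diam Y) := by
          gcongr
      _ = _ := by rw [mul_inv]; ring
  have hlower := (ftStar_sub_le_of_slater hYb hYconv (hgtconv xe hxe) hLipft hLft hslater hG
    hxe hye).trans hpenalty
  exact abs_sub_le_iff.mpr ⟨hupper.trans (le_max_left _ _), hlower.trans (le_max_right _ _)⟩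

theorem stmt16 {n m l : ℕ} (hn : 0 < n) (hm : 0 < m) (hl : 0 < l)
    (X : Set (En n)) (Y : Set (En m))
    (hXne : X.Nonempty) (hXcpt : IsCompact X)
    (hYne : Y.Nonempty) (hYcpt : IsCompact Y) (hYconv : Convex ℝ Y)
    (f ft : En n × En m → ℝ) (gt : En n × En m → En l)
    (hfc : ContinuousOn f (X ×ˢ Y)) (hftc : ContinuousOn ft (X ×ˢ Y))
    (hgtc : ContinuousOn gt (X ×ˢ Y))
    (hftconv : ∀ x ∈ X, ConvexOn ℝ Y fun z => ft (x, z))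
    (hgtconv : ∀ x ∈ X, ∀ i, ConvexOn ℝ Y fun z => gt (x, z) i)
    (hfeas : ∀ x ∈ X, ∃ z ∈ Y, ∀ i, gt (x, z) i ≤ 0)
    (Lft G : ℝ) (hLft : 0 ≤ Lft) (hG : 0 < G)
    (hLipft : LipOnXY ft Lft X Y)
    (hslater : Slater gt X Y G)
    (ρ μ ε : ℝ) (hρ : 0 < ρ) (hμ : 0 < μ) (hε : 0 < ε)
    (Lf : ℝ) (hLf : 0 ≤ Lf)
    (xe : En n) (hxe : xe ∈ X) (ye : En m) (hye : ye ∈ Y)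
    (hg : ‖posPart (gt (xe, ye))‖ ≤
      (2 * μ * G)⁻¹ * Metric.diam Y * (ρ⁻¹ * ε + ρ⁻¹ * Lf + Lft)) :
    |ft (xe, ye) - ftStar ft gt Y xe| ≤
      max (ρ⁻¹ * (maxPc f ft gt Y ρ μ xe ye - fLow f X Y))
        ((2 * μ)⁻¹ * G⁻¹ ^ 2 * Metric.diam Y ^ 2 * Lft * (ρ⁻¹ * ε + ρ⁻¹ * Lf + Lft)) :=
  stmt16_general X Y hXcpt hYcpt hYconv f ft gt hfc hgtconv hfeas Lft G hLft hG hLipft hslater ρ μ ε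
    hρ hμ Lf xe hxe ye hye hg
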